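/- In the rank comparison lemma with β = 0: if f·g = α·g + γ as formal power series, f(0) ≠ α, and g(0) ≠ 0, then for every d ∈ ℕ, rank(H[f]^{(d,d)}) ≥ rank(H[g]^{(d,d)}) − 2. -/

import Mathlib

/-!
Put `u = f - α`, so that `u * g = γ` and `u(0) ≠ 0`. Splitting the convolution
`(u g)_{i+j} = Σ_p u_p g_{i+j-p}` at `p = i` gives `L_u H[g] + H[u'] U_g = H[γ]`, where `L_u` is
the lower triangular Toeplitz matrix of `u` (invertible, as `u(0) ≠ 0`), `u' = tail u` is
`(u - u(0)) / X` and `U_g` is a strictly upper triangular Toeplitz matrix. Since `H[γ]` has rank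
at most one, `rank H[g] ≤ rank H[u'] + 1`. Finally `u' = f'`, and `H[f']` is `H[f]` with its rows
moved up by one and a new last row, so `rank H[f'] ≤ rank H[f] + 1`.
-/

/-- The `(d+1)×(d+1)` Hankel matrix of the coefficients of a power series. -/
noncomputable def hankel (d : ℕ) (h : PowerSeries ℝ) : Matrix (Fin (d + 1)) (Fin (d + 1)) ℝ :=
  Matrix.of fun i j => PowerSeries.coeff ((i : ℕ) + j) h

open Finset PowerSeries

namespace Matrix

variable {m n K : Type*} [Fintype n] [Field K]

theorem rank_add_le (A B : Matrix m n K) : (A + B).rank ≤ A.rank + B.rank := by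
  rw [rank, mulVecLin_add]
  exact (Submodule.finrank_mono (LinearMap.range_add_le _ _)).trans
    (Submodule.finrank_add_le_finrank_add_finrank _ _)

theorem rank_neg (A : Matrix m n K) : (-A).rank = A.rank := by
  have : (-A).mulVecLin = -A.mulVecLin := by ext; simp
  rw [rank, this, LinearMap.range_neg, rank]

end Matrix

theorem Fin.sum_univ_ite_lt {M : Type*} [AddCommMonoid M] {d m : ℕ} (hm : m ≤ d + 1)
    (F : ℕ → M) :
    ∑ k : Fin (d + 1), (if (k : ℕ) < m then F k else 0) = ∑ k ∈ range m, F k := by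
  rw [Fin.sum_univ_eq_sum_range (fun k => if k < m then F k else 0), ← sum_filter]
  congr 1
  ext k
  simp only [mem_filter, mem_range]
  omega

namespace PowerSeries

variable {R : Type*}

noncomputable def tail [Semiring R] (f : R⟦X⟧) : R⟦X⟧ := mk fun n => coeff (n + 1) f

@[simp]
theorem coeff_tail [Semiring R] (f : R⟦X⟧) (n : ℕ) : coeff n (tail f) = coeff (n + 1) f :=
  coeff_mk _ _

theorem tail_sub_C [Ring R] (f : R⟦X⟧) (a : R) : tail (f - C a) = tail f := by
  ext n
  simp

end PowerSeries

noncomputable def lowerToeplitz (d : ℕ) (u : PowerSeries ℝ) :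
    Matrix (Fin (d + 1)) (Fin (d + 1)) ℝ :=
  Matrix.of fun i k => if (k : ℕ) ≤ i then coeff ((i : ℕ) - k) u else 0

noncomputable def strictUpperToeplitz (d : ℕ) (g : PowerSeries ℝ) :
    Matrix (Fin (d + 1)) (Fin (d + 1)) ℝ :=
  Matrix.of fun k j => if (k : ℕ) < j then coeff ((j : ℕ) - 1 - k) g else 0

theorem det_lowerToeplitz (d : ℕ) (u : PowerSeries ℝ) :
    (lowerToeplitz d u).det = coeff 0 u ^ (d + 1) := by
  have hlower : (lowerToeplitz d u).BlockTriangular OrderDual.toDual := fun i k hik => by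
    have : (i : ℕ) < k := hik
    simp only [lowerToeplitz, Matrix.of_apply]
    rw [if_neg (by omega)]
  rw [Matrix.det_of_isLowerTriangular _ hlower]
  simp [lowerToeplitz]

theorem lowerToeplitz_mul_hankel_add_hankel_tail_mul (d : ℕ) (u g : PowerSeries ℝ) :
    lowerToeplitz d u * hankel d g + hankel d (tail u) * strictUpperToeplitz d g =
      hankel d (u * g) := by
  ext i j
  set F : ℕ → ℝ := fun p => coeff p u * coeff ((i : ℕ) + j - p) g
  have hlower : (lowerToeplitz d u * hankel d g) i j = ∑ p ∈ range (i + 1), F p := by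
    simp only [Matrix.mul_apply, lowerToeplitz, hankel, Matrix.of_apply, ite_mul, zero_mul,
      Nat.le_iff_lt_add_one]
    rw [Fin.sum_univ_ite_lt (by omega) (fun k => coeff ((i : ℕ) - k) u * coeff (k + j) g),
      ← sum_range_reflect F]
    refine sum_congr rfl fun k hk => ?_
    have : k < (i : ℕ) + 1 := mem_range.1 hk
    simp only [F]
    rw [show (i : ℕ) + 1 - 1 - k = i - k by omega,
      show (i : ℕ) + j - (i - k) = k + j by omega]
  have hupper : (hankel d (tail u) * strictUpperToeplitz d g) i j =
      ∑ k ∈ range j, F (i + 1 + k) := by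
    simp only [Matrix.mul_apply, strictUpperToeplitz, hankel, Matrix.of_apply, mul_ite, mul_zero,
      coeff_tail]
    rw [Fin.sum_univ_ite_lt (by omega)
      (fun k => coeff ((i : ℕ) + k + 1) u * coeff ((j : ℕ) - 1 - k) g)]
    refine sum_congr rfl fun k hk => ?_
    have : k < (j : ℕ) := mem_range.1 hk
    simp only [F]
    rw [show (i : ℕ) + 1 + k = i + k + 1 by omega,
      show (i : ℕ) + j - (i + k + 1) = j - 1 - k by omega]
  have hprod : coeff ((i : ℕ) + j) (u * g) = ∑ p ∈ range (i + 1 + j), F p := by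
    rw [coeff_mul, Nat.sum_antidiagonal_eq_sum_range_succ_mk, add_right_comm]
  rw [Matrix.add_apply, hlower, hupper, hankel, Matrix.of_apply, hprod,
    sum_range_add F ((i : ℕ) + 1) j]

theorem rank_hankel_C_le (d : ℕ) (γ : ℝ) : (hankel d (C γ)).rank ≤ 1 := by
  have : hankel d (C γ) = Matrix.vecMulVec (fun i : Fin (d + 1) => if (i : ℕ) = 0 then γ else 0)
      (fun j : Fin (d + 1) => if (j : ℕ) = 0 then 1 else 0) := by
    ext i j
    simp only [hankel, Matrix.of_apply, Matrix.vecMulVec_apply, coeff_C, Nat.add_eq_zero_iff]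
    split_ifs <;> simp_all
  exact this ▸ Matrix.rank_vecMulVec_le _ _

theorem rank_hankel_tail_le (d : ℕ) (f : PowerSeries ℝ) :
    (hankel d (tail f)).rank ≤ (hankel d f).rank + 1 := by
  let S : Matrix (Fin (d + 1)) (Fin (d + 1)) ℝ :=
    Matrix.of fun i k => if (i : ℕ) + 1 = k then 1 else 0
  have h : hankel d (tail f) = S * hankel d f +
      Matrix.vecMulVec (fun i : Fin (d + 1) => if (i : ℕ) = d then 1 else 0)
        (fun j : Fin (d + 1) => coeff (d + j + 1) f) := by
    ext i j
    have hS : (S * hankel d f) i j = if (i : ℕ) < d then coeff ((i : ℕ) + 1 + j) f else 0 := by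
      simp only [Matrix.mul_apply, S, hankel, Matrix.of_apply, ite_mul, one_mul, zero_mul]
      rw [Fin.sum_univ_eq_sum_range (fun k => if (i : ℕ) + 1 = k then coeff (k + j) f else 0),
        sum_ite_eq]
      simp only [mem_range, Nat.add_lt_add_iff_right]
    have hi := i.is_le
    rw [Matrix.add_apply, hS, Matrix.vecMulVec_apply, hankel, Matrix.of_apply, coeff_tail]
    by_cases hid : (i : ℕ) = d
    · simp [hid]
    · rw [if_pos (by omega), if_neg hid, zero_mul, add_zero, add_right_comm]
  rw [h]
  exact (Matrix.rank_add_le _ _).trans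
    (add_le_add (Matrix.rank_mul_le_right _ _) (Matrix.rank_vecMulVec_le _ _))

theorem rank_hankel_le_of_mul_eq_C {u g : PowerSeries ℝ} {γ : ℝ} (hu : coeff 0 u ≠ 0)
    (hug : u * g = C γ) (d : ℕ) :
    (hankel d g).rank ≤ (hankel d (tail u)).rank + 1 := by
  have hdet : IsUnit (lowerToeplitz d u).det := by
    rw [det_lowerToeplitz]
    exact (pow_ne_zero _ hu).isUnit
  have h := eq_sub_of_add_eq (lowerToeplitz_mul_hankel_add_hankel_tail_mul d u g)
  rw [hug, sub_eq_add_neg] at h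
  calc (hankel d g).rank = (lowerToeplitz d u * hankel d g).rank :=
        (Matrix.rank_mul_eq_right_of_isUnit_det _ _ hdet).symm
    _ ≤ (hankel d (C γ)).rank + (hankel d (tail u) * strictUpperToeplitz d g).rank := by
        rw [h, ← Matrix.rank_neg (hankel d (tail u) * _)]
        exact Matrix.rank_add_le _ _
    _ ≤ 1 + (hankel d (tail u)).rank :=
        add_le_add (rank_hankel_C_le d γ) (Matrix.rank_mul_le_left _ _)
    _ = (hankel d (tail u)).rank + 1 := add_comm _ _

theorem hankel_rank_comparison_beta_zero_general (f g : PowerSeries ℝ) (α γ : ℝ)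
    (hf : PowerSeries.coeff 0 f ≠ α)
    (heq : f * g = PowerSeries.C α * g + PowerSeries.C γ) (d : ℕ) :
    (hankel d g).rank ≤ (hankel d f).rank + 2 := by
  have hu : coeff 0 (f - C α) ≠ 0 := by simpa [sub_eq_zero] using hf
  have hug : (f - C α) * g = C γ := by rw [sub_mul, heq]; ring
  calc (hankel d g).rank ≤ (hankel d (tail (f - C α))).rank + 1 :=
        rank_hankel_le_of_mul_eq_C hu hug d
    _ = (hankel d (tail f)).rank + 1 := by rw [tail_sub_C]
    _ ≤ (hankel d f).rank + 2 := by
        have := rank_hankel_tail_le d f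
        omega

/-- Rank comparison with `β = 0`: if `f·g = α·g + γ`, `f(0) ≠ α` and `g(0) ≠ 0`,
then `rank(H[f]^{(d,d)}) ≥ rank(H[g]^{(d,d)}) − 2`. -/
theorem hankel_rank_comparison_beta_zero (f g : PowerSeries ℝ) (α γ : ℝ)
    (hf : PowerSeries.coeff 0 f ≠ α) (hg : PowerSeries.coeff 0 g ≠ 0)
    (heq : f * g = PowerSeries.C α * g + PowerSeries.C γ) (d : ℕ) :
    (hankel d g).rank ≤ (hankel d f).rank + 2 :=
  hankel_rank_comparison_beta_zero_general f g α γ hf heq d
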